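/- Let q ≥ 2 and n ≥ 1 be integers and let g ∈ F_q be any function other than the constant-one function 1_q. Then the subset Φ = F_q \ {g} is n-cell implementable under scenario (•∗) if and only if q ≤ n + 1. -/

import Mathlib

/-- The alphabet 𝔹• = {0, 1, ∗, •}. -/
inductive BB : Type
  | zero
  | one
  | star
  | reject
deriving DecidableEq

instance : Fintype BB :=
  ⟨{BB.zero, BB.one, BB.star, BB.reject}, fun x => by cases x <;> first | decide | simp⟩

/-- The cell function T : 𝔹• × 𝔹• → 𝔹: T(u,ϑ) = 1 iff u = ∗, or ϑ = ∗,
or u,ϑ ∈ 𝔹 with u = ϑ. -/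
def Tcell : BB → BB → Bool
  | BB.star, _ => true
  | _, BB.star => true
  | BB.zero, BB.zero => true
  | BB.one, BB.one => true
  | _, _ => false

/-- The word-level function T(u,ϑ) = ⋀_{j<n} T(u_j, ϑ_j). -/
def Tword {n : ℕ} (u θ : Fin n → BB) : Bool :=
  decide (∀ j, Tcell (u j) (θ j) = true)

/-- The alphabet 𝔹 = {0,1} ⊆ 𝔹•. -/
def Bcirc : Set BB := {BB.zero, BB.one}

/-- The alphabet 𝔹∗ = {0,1,∗} ⊆ 𝔹•. -/
def Bstar : Set BB := {BB.zero, BB.one, BB.star}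

/-- The full alphabet 𝔹•. -/
def Bdot : Set BB := Set.univ

/-- A family Φ of functions {0,…,q−1} → 𝔹 is n-cell implementable under
scenario (A,B) if there are mappings u : {0,…,q−1} → A^n and ϑ : Φ → B^n
with f(x) = T(u(x), ϑ(f)) for all f ∈ Φ and x. -/
def Implementable (A B : Set BB) (n q : ℕ) (Φ : Set (Fin q → Bool)) : Prop :=
  ∃ u : Fin q → Fin n → BB, ∃ θ : (Fin q → Bool) → Fin n → BB,
    (∀ x j, u x j ∈ A) ∧ (∀ f ∈ Φ, ∀ j, θ f j ∈ B) ∧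
    (∀ f ∈ Φ, ∀ x, f x = Tword (u x) (θ f))

/-- The family 𝓔_q = { x ↦ [x = t] : t ∈ [q⟩ }. -/
def Eset (q : ℕ) : Set (Fin q → Bool) :=
  { f | ∃ t : Fin q, f = fun x => decide (x = t) }

/-- The family 𝓝_q = { x ↦ [x ≠ t] : t ∈ [q⟩ }. -/
def Nset (q : ℕ) : Set (Fin q → Bool) :=
  { f | ∃ t : Fin q, f = fun x => decide (x ≠ t) }

/-- The family 𝓖_q = { x ↦ [x ≥ t] : t ∈ [q⟩ }. -/
def Gset (q : ℕ) : Set (Fin q → Bool) :=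
  { f | ∃ t : Fin q, f = fun x => decide (t ≤ x) }

/-- The family 𝓛_q = { x ↦ [x ≤ t] : t ∈ [q⟩ }. -/
def Lset (q : ℕ) : Set (Fin q → Bool) :=
  { f | ∃ t : Fin q, f = fun x => decide (x ≤ t) }

/-!
Pick `y` with `g y = false`. Every `f` with `f y = true` lies in `{g}ᶜ`, so the `q - 1` inputs
`x ≠ y` are shattered: each set of them is the set of inputs rejected by some pattern in `𝔹∗ⁿ`.
A pattern rejects the union, over the coordinates `j`, of nothing (`∗`), the inputs rejected by
`0`, or those rejected by `1`. Such a system of two sets per coordinate shatters at most as many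
points as it has coordinates: every singleton is offered by some coordinate, and when `a ≠ b`
share one, that coordinate offers exactly `{a}` and `{b}`, so merging `b` into `a` and dropping
the coordinate keeps the rest shattered.

Conversely, with one coordinate for each `x ≠ y`, input `x` carries `•` or `1` there (as `g x` is
true or not), and `y` carries `0` everywhere, which lets the pattern of `f` reject `y` exactly
when `f y = false` and `f` differs from `g` at some `x ≠ y`.
-/

section PairUnion

variable {α ι : Type*} [DecidableEq α]

def IsPairUnion (P Q : ι → Finset α) (J : Finset ι) (C : Finset α) : Prop :=
  ∃ D : ι → Finset α, (∀ j ∈ J, D j = ∅ ∨ D j = P j ∨ D j = Q j) ∧ J.biUnion D = C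

theorem IsPairUnion.exists_eq_singleton {P Q : ι → Finset α} {J : Finset ι} {x : α}
    (h : IsPairUnion P Q J {x}) : ∃ j ∈ J, P j = {x} ∨ Q j = {x} := by
  obtain ⟨D, hD, hU⟩ := h
  obtain ⟨j, hj, hxj⟩ := Finset.mem_biUnion.1 (hU ▸ Finset.mem_singleton_self x)
  have hDj : D j = {x} :=
    (Finset.subset_singleton_iff.1 (hU ▸ Finset.subset_biUnion_of_mem D hj)).resolve_left
      (Finset.ne_empty_of_mem hxj)
  rcases hD j hj with h | h | h
  · exact absurd (h ▸ hDj) (Finset.singleton_ne_empty x).symm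
  · exact ⟨j, hj, .inl (h ▸ hDj)⟩
  · exact ⟨j, hj, .inr (h ▸ hDj)⟩

/-- A set `C ∋ x` is the image of the realisation of its preimage, in which `x` and `y` cannot
both be covered by coordinate `j`. -/
theorem isPairUnion_merge [DecidableEq ι] {P Q : ι → Finset α} {J : Finset ι} {X : Finset α}
    {j : ι} {x y : α}
    (hX : ∀ C ⊆ X, IsPairUnion P Q J C) (hj : j ∈ J) (hx : x ∈ X) (hy : y ∈ X) (hxy : x ≠ y)
    (hP : P j = {x} ∨ P j = {y}) (hQ : Q j = {x} ∨ Q j = {y}) (C : Finset α)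
    (hC : C ⊆ X.erase y) :
    IsPairUnion (fun k => (P k).image (Function.update id y x))
      (fun k => (Q k).image (Function.update id y x)) (J.erase j) C := by
  set f : α → α := Function.update id y x
  have hfy : f y = x := Function.update_self y x id
  have hf : ∀ z ≠ y, f z = z := fun z hz => Function.update_of_ne hz x id
  set C₀ := X.filter (f · ∈ C)
  have hfC₀ : C₀.image f = C := by
    ext z
    simp only [C₀, Finset.mem_image, Finset.mem_filter]
    constructor
    · rintro ⟨w, ⟨-, hw⟩, rfl⟩
      exact hw
    · intro hz
      have hzy : z ≠ y := (Finset.mem_erase.1 (hC hz)).1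
      exact ⟨z, ⟨(Finset.mem_erase.1 (hC hz)).2, (hf z hzy).symm ▸ hz⟩, hf z hzy⟩
  obtain ⟨D, hD, hU⟩ := hX C₀ (Finset.filter_subset _ _)
  have hDj : D j = ∅ ∨ D j = {x} ∨ D j = {y} := by
    rcases hD j hj with h | h | h <;> simp_all
  have hcover : (D j).image f ⊆ (J.erase j).biUnion fun k => (D k).image f := by
    intro w hw
    obtain ⟨v, hv, rfl⟩ := Finset.mem_image.1 hw
    have hfv : f v = x := by rcases hDj with h | h | h <;> simp_all
    have hxC : x ∈ C :=
      hfC₀ ▸ hfv ▸ Finset.mem_image_of_mem f (hU ▸ Finset.mem_biUnion.2 ⟨j, hj, hv⟩)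
    obtain ⟨v', hv'C₀, hv'j, hfv'⟩ : ∃ v' ∈ C₀, v' ∉ D j ∧ f v' = x := by
      rcases hDj with h | h | h
      · simp [h] at hv
      · exact ⟨y, by simp [C₀, hy, hfy, hxC], by simp [h, hxy.symm], hfy⟩
      · exact ⟨x, by simp [C₀, hx, hf x hxy, hxC], by simp [h, hxy], hf x hxy⟩
    obtain ⟨k, hk, hv'k⟩ := Finset.mem_biUnion.1 (hU ▸ hv'C₀)
    have hkj : k ≠ j := by
      rintro rfl
      exact hv'j hv'k
    rw [hfv]
    exact Finset.mem_biUnion.2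
      ⟨k, Finset.mem_erase.2 ⟨hkj, hk⟩, hfv' ▸ Finset.mem_image_of_mem f hv'k⟩
  refine ⟨fun k => (D k).image f, fun k hk => ?_, ?_⟩
  · rcases hD k (Finset.mem_of_mem_erase hk) with h | h | h <;> simp [h]
  · rw [← hfC₀, ← hU, Finset.biUnion_image, ← Finset.insert_erase hj, Finset.biUnion_insert,
      Finset.erase_insert_eq_erase, Finset.erase_idem, Finset.union_eq_right.2 hcover]

theorem card_le_card_of_forall_isPairUnion [DecidableEq ι] {P Q : ι → Finset α} {J : Finset ι}
    {X : Finset α}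
    (hX : ∀ C ⊆ X, IsPairUnion P Q J C) : X.card ≤ J.card := by
  induction J using Finset.strongInduction generalizing X P Q with
  | H J ih =>
  have hsingle (x : α) (hx : x ∈ X) : ∃ j ∈ J, P j = {x} ∨ Q j = {x} :=
    (hX {x} (Finset.singleton_subset_iff.2 hx)).exists_eq_singleton
  obtain rfl | ⟨x₀, hx₀⟩ := X.eq_empty_or_nonempty
  · simp
  have : Nonempty ι := ⟨(hsingle x₀ hx₀).choose⟩
  choose! js hjs hside using hsingle
  by_cases hinj : Set.InjOn js (X : Set α)
  · exact Finset.card_le_card_of_injOn js hjs hinj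
  obtain ⟨x, hx, y, hy, hxy_j, hxy⟩ : ∃ x ∈ X, ∃ y ∈ X, js x = js y ∧ x ≠ y := by
    simpa [Set.InjOn] using hinj
  have hPQ : (P (js x) = {x} ∨ P (js x) = {y}) ∧ (Q (js x) = {x} ∨ Q (js x) = {y}) := by
    have := hside y hy
    rw [← hxy_j] at this
    rcases hside x hx with h | h <;> rcases this with h' | h' <;> simp_all
  have hrec := ih _ (Finset.erase_ssubset (hjs x hx))
    (isPairUnion_merge hX (hjs x hx) hx hy hxy hPQ.1 hPQ.2)
  rw [Finset.card_erase_of_mem hy, Finset.card_erase_of_mem (hjs x hx)] at hrec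
  have := Finset.card_pos.2 ⟨js x, hjs x hx⟩
  omega

end PairUnion

theorem Tcell_star_right (a : BB) : Tcell a BB.star = true := by
  cases a <;> rfl

theorem isPairUnion_filter_Tword_eq_false {α : Type*} [DecidableEq α] {n : ℕ} (X : Finset α)
    (u : α → Fin n → BB) {θ : Fin n → BB} (hθ : ∀ j, θ j ∈ Bstar) :
    IsPairUnion (fun j => X.filter fun x => Tcell (u x j) BB.zero = false)
      (fun j => X.filter fun x => Tcell (u x j) BB.one = false) Finset.univ
      (X.filter fun x => Tword (u x) θ = false) := by
  refine ⟨fun j => X.filter fun x => Tcell (u x j) (θ j) = false, fun j _ => ?_, ?_⟩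
  · obtain h | h | h : θ j = BB.zero ∨ θ j = BB.one ∨ θ j = BB.star := hθ j
    all_goals simp [h, Tcell_star_right]
  · ext x
    simp [Tword]

theorem le_succ_of_implementable {A : Set BB} {n q : ℕ} {Φ : Set (Fin q → Bool)}
    (h : Implementable A Bstar n q Φ) (y : Fin q)
    (hΦ : ∀ f : Fin q → Bool, f y = true → f ∈ Φ) : q ≤ n + 1 := by
  obtain ⟨u, θ, -, hθ, hT⟩ := h
  have hcard := card_le_card_of_forall_isPairUnion (X := Finset.univ.erase y) fun C hC => by
    have hyC : y ∉ C := fun h => (Finset.mem_erase.1 (hC h)).1 rfl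
    set f : Fin q → Bool := fun x => decide (x ∉ C)
    have hf : f ∈ Φ := hΦ f (by simpa [f] using hyC)
    convert isPairUnion_filter_Tword_eq_false (Finset.univ.erase y) u (hθ f hf)
    ext x
    simp only [Finset.mem_filter, Finset.mem_erase, Finset.mem_univ, ← hT f hf, f]
    constructor
    · intro hx
      exact ⟨⟨fun h => hyC (h ▸ hx), trivial⟩, by simpa using hx⟩
    · rintro ⟨-, hx⟩
      simpa using hx
  simp at hcard
  omega

theorem exists_forall_ne_mem_range {α : Type*} [Fintype α] [DecidableEq α] {n : ℕ}
    (hα : Fintype.card α ≤ n + 1) (y : α) : ∃ c : Fin n → α, ∀ x ≠ y, x ∈ Set.range c := by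
  obtain ⟨e⟩ : Nonempty ({x // x ≠ y} ↪ Fin n) :=
    Function.Embedding.nonempty_of_card_le (by simp; omega)
  exact ⟨Function.extend e Subtype.val fun _ => y,
    fun x hx => ⟨e ⟨x, hx⟩, e.injective.extend_apply _ _ _⟩⟩

section Construction

variable {α : Type*} {n : ℕ}

def coverWord [DecidableEq α] (g : α → Bool) (y : α) (c : Fin n → α) (x : α) : Fin n → BB :=
  fun j =>
    if x = y then BB.zero else if c j = x then (if g x then BB.reject else BB.one) else BB.star

def coverPattern (g : α → Bool) (y : α) (c : Fin n → α) (f : α → Bool) : Fin n → BB := fun j =>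
  if f y = true ∨ f (c j) = g (c j) then (if f (c j) then BB.star else BB.zero) else BB.one

theorem coverPattern_mem_Bstar (g : α → Bool) (y : α) (c : Fin n → α) (f : α → Bool)
    (j : Fin n) : coverPattern g y c f j ∈ Bstar := by
  unfold coverPattern
  split_ifs <;> simp [Bstar]

theorem Tcell_zero_ite (p : Prop) [Decidable p] (b : Bool) :
    Tcell BB.zero (if p then (if b then BB.star else BB.zero) else BB.one) = decide p := by
  by_cases p <;> cases b <;> simp_all [Tcell]

theorem Tcell_ite_reject_one (a b c : Bool) :
    Tcell (if c then BB.reject else BB.one)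
      (if a = true ∨ b = c then (if b then BB.star else BB.zero) else BB.one) = b := by
  revert a b c
  decide

theorem Tword_coverWord_coverPattern [DecidableEq α] {g f : α → Bool} {y : α} {c : Fin n → α}
    (hgy : g y = false) (hc : ∀ x ≠ y, x ∈ Set.range c) (hfg : f ≠ g) (x : α) :
    Tword (coverWord g y c x) (coverPattern g y c f) = f x := by
  by_cases hxy : x = y
  · subst hxy
    have hfx : (∀ j, f x = true ∨ f (c j) = g (c j)) ↔ f x = true := by
      refine ⟨fun h => ?_, fun h _ => .inl h⟩
      by_contra hfx'
      obtain ⟨z, hz⟩ := Function.ne_iff.1 hfg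
      obtain ⟨j, rfl⟩ := hc z fun hzx => hz (hzx ▸ by simpa [hgy] using hfx')
      exact hz ((h j).resolve_left hfx')
    have hcell (j : Fin n) : Tcell (coverWord g x c x j) (coverPattern g x c f j) = true ↔
        (f x = true ∨ f (c j) = g (c j)) := by
      rw [coverWord, if_pos rfl, coverPattern, Tcell_zero_ite, decide_eq_true_eq]
    simp only [Tword, hcell]
    exact Bool.eq_iff_iff.2 (by simpa using hfx)
  · obtain ⟨j₀, hj₀⟩ := hc x hxy
    have hcell (j : Fin n) :
        Tcell (coverWord g y c x j) (coverPattern g y c f j) = true ↔ (c j = x → f x = true) := by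
      by_cases hj : c j = x
      · simp [coverWord, coverPattern, hxy, hj, Tcell_ite_reject_one]
      · simp [coverWord, hxy, hj, Tcell]
    simp only [Tword, hcell]
    exact Bool.eq_iff_iff.2 (by simpa using ⟨fun h => h j₀ hj₀, fun h _ _ => h⟩)

theorem implementable_compl_singleton_of_covers {q : ℕ} {g : Fin q → Bool} {y : Fin q}
    (hgy : g y = false) {c : Fin n → Fin q} (hc : ∀ x ≠ y, x ∈ Set.range c) :
    Implementable Bdot Bstar n q {g}ᶜ :=
  ⟨coverWord g y c, coverPattern g y c, fun _ _ => Set.mem_univ _,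
    fun f _ => coverPattern_mem_Bstar g y c f,
    fun _ hf x => (Tword_coverWord_coverPattern hgy hc hf x).symm⟩

end Construction

theorem Fset_minus_g_implementable_rejectStar_general (q n : ℕ)
    (g : Fin q → Bool) (hg1 : g ≠ fun _ => true) :
    Implementable Bdot Bstar n q ({g}ᶜ) ↔ q ≤ n + 1 := by
  obtain ⟨y, hgy⟩ : ∃ y, g y = false := by
    simpa [funext_iff] using hg1
  refine ⟨fun h => le_succ_of_implementable h y fun f hf => ?_, fun hqn => ?_⟩
  · rintro rfl
    simp [hgy] at hf
  · obtain ⟨c, hc⟩ := exists_forall_ne_mem_range (by simpa using hqn) y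
    exact implementable_compl_singleton_of_covers hgy hc

theorem Fset_minus_g_implementable_rejectStar (q n : ℕ) (hq : 2 ≤ q) (hn : 1 ≤ n)
    (g : Fin q → Bool) (hg1 : g ≠ fun _ => true) :
    Implementable Bdot Bstar n q ({g}ᶜ) ↔ q ≤ n + 1 :=
  Fset_minus_g_implementable_rejectStar_general q n g hg1
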